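/- Let H be Hermitian with spectrum contained in [a,b] ⊂ ℝ and let z ∈ ℂ with dist(z,[a,b]) > 0. Then for indices i,j at graph distance d(i,j) = m in the graph of H, |(H − zI)^{-1}(i,j)| ≤ C·ρ^{-m}, where ρ > 1 and C > 0 depend only on z, a, b (explicitly, ρ = |w + √(w²−1)| with w = (2z − (b+a))/(b−a)). -/

import Mathlib

/-!
Write `w = (u + u⁻¹)/2` with `0 < ‖u‖ < 1` (possible exactly when `w ∉ [-1, 1]`) and
`x = (v + v⁻¹)/2` with `‖v‖ = 1`. Then `(w - x)⁻¹ = 2u / ((1 - uv)(1 - uv⁻¹))`, and expanding both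
factors in geometric series gives the Chebyshev expansion
`(w - x)⁻¹ = 2u/(1 - u²) · (2 ∑ₖ uᵏ Tₖ(x) - 1)`, whose truncation after `m` terms is uniformly
`O(‖u‖ᵐ)` on `[-1, 1]`. An affine change of variables moves this to `t ↦ (t - z)⁻¹` on `[a, b]`.
A polynomial in `H` of degree `< m` vanishes at `(i, j)` when `d(i, j) ≥ m`, so
`(H - z)⁻¹ i j = ((H - z)⁻¹ - p(H)) i j`, and by the spectral theorem this entry is bounded by
the sup-norm of `(t - z)⁻¹ - p(t)` over the eigenvalues.
-/

open Matrix

/-- The (simple) graph of a matrix `H`: an edge between distinct `u, v` whenever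
`H` has a nonzero entry at `(u,v)` or `(v,u)`. -/
def matGraph {n : ℕ} (H : Matrix (Fin n) (Fin n) ℂ) : SimpleGraph (Fin n) where
  Adj u v := u ≠ v ∧ (H u v ≠ 0 ∨ H v u ≠ 0)
  symm := ⟨fun _ _ h => ⟨h.1.symm, h.2.symm⟩⟩
  loopless := ⟨fun _ h => h.1 rfl⟩

open Polynomial Set Unitary

namespace Complex

lemma joukowski_eq_re_of_norm_eq_one {ζ : ℂ} (hζ : ‖ζ‖ = 1) : (ζ + ζ⁻¹) / 2 = ζ.re := by
  rw [inv_eq_conj hζ, add_conj]; push_cast; ring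

lemma exists_norm_eq_one_joukowski_eq {x : ℝ} (hx : x ∈ Icc (-1) 1) :
    ∃ v : ℂ, ‖v‖ = 1 ∧ (v + v⁻¹) / 2 = x := by
  refine ⟨exp (Real.arccos x * I), norm_exp_ofReal_mul_I _, ?_⟩
  rw [joukowski_eq_re_of_norm_eq_one (norm_exp_ofReal_mul_I _), exp_ofReal_mul_I_re,
    Real.cos_arccos hx.1 hx.2]

lemma exists_joukowski_eq_of_mul_eq_one {w p q : ℂ} (hw : w ∉ ofReal '' Icc (-1) 1)
    (hpq : p * q = 1) (hw_eq : (p + q) / 2 = w) (hqp : ‖q‖ ≤ ‖p‖) :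
    ∃ u : ℂ, u ≠ 0 ∧ (u + u⁻¹) / 2 = w ∧ ‖u‖ < 1 ∧ ‖u‖⁻¹ = max ‖p‖ ‖q‖ := by
  have hq : q ≠ 0 := right_ne_zero_of_mul_eq_one hpq
  have hq_inv : q⁻¹ = p := inv_eq_of_mul_eq_one_left hpq
  have hnorm : ‖p‖ * ‖q‖ = 1 := by rw [← norm_mul, hpq, norm_one]
  have hq_lt : ‖q‖ < 1 := by
    refine lt_of_le_of_ne (by nlinarith [norm_nonneg q]) fun hq1 => hw ⟨q.re, ?_, ?_⟩
    · exact abs_le.mp (hq1 ▸ abs_re_le_norm q)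
    · rw [← joukowski_eq_re_of_norm_eq_one hq1, hq_inv, add_comm, hw_eq]
  refine ⟨q, hq, by rw [hq_inv, add_comm, hw_eq], hq_lt, ?_⟩
  rw [max_eq_left hqp, ← norm_inv, hq_inv]

/-- `w ± s` are the two preimages of `w` under the Joukowski map `u ↦ (u + u⁻¹)/2`. -/
lemma exists_joukowski_eq_norm_lt_one {w s : ℂ} (hw : w ∉ ofReal '' Icc (-1) 1)
    (hs : s ^ 2 = w ^ 2 - 1) :
    ∃ u : ℂ, u ≠ 0 ∧ (u + u⁻¹) / 2 = w ∧ ‖u‖ < 1 ∧ ‖u‖⁻¹ = max ‖w + s‖ ‖w - s‖ := by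
  have hprod : (w + s) * (w - s) = 1 := by linear_combination -hs
  rcases le_total ‖w - s‖ ‖w + s‖ with h | h
  · exact exists_joukowski_eq_of_mul_eq_one hw hprod (by ring) h
  · rw [max_comm]
    exact exists_joukowski_eq_of_mul_eq_one hw (by rw [mul_comm, hprod]) (by ring) h

end Complex

lemma norm_pow_div_one_sub_le {𝕜 : Type*} [NormedField 𝕜] {t : 𝕜} (ht : ‖t‖ < 1) (m : ℕ) :
    ‖t ^ m / (1 - t)‖ ≤ ‖t‖ ^ m / (1 - ‖t‖) := by
  have : 0 < 1 - ‖t‖ := sub_pos.mpr ht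
  rw [norm_div, norm_pow]
  gcongr
  simpa only [norm_one] using norm_sub_norm_le (1 : 𝕜) t

lemma inv_one_sub_sub_geom_sum {K : Type*} [Field K] {t : K} (ht : t ≠ 1) (m : ℕ) :
    (1 - t)⁻¹ - ∑ k ∈ Finset.range m, t ^ k = t ^ m / (1 - t) := by
  have : 1 - t ≠ 0 := sub_ne_zero.mpr ht.symm
  rw [geom_sum_eq ht, ← neg_sub 1 t, ← neg_sub 1 (t ^ m), neg_div_neg_eq]
  field_simp
  ring

lemma joukowski_sub_joukowski {u v : ℂ} (hu : u ≠ 0) (hv : v ≠ 0) :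
    (u + u⁻¹) / 2 - (v + v⁻¹) / 2 = (1 - u * v) * (1 - u * v⁻¹) / (2 * u) := by
  field_simp
  ring

lemma inv_joukowski_sub_joukowski {u v : ℂ} (hu : u ≠ 0) (hv : v ≠ 0)
    (huv : u * v ≠ 1) (huv' : u * v⁻¹ ≠ 1) (hu2 : u ^ 2 ≠ 1) :
    ((u + u⁻¹) / 2 - (v + v⁻¹) / 2)⁻¹ =
      2 * u / (1 - u ^ 2) * ((1 - u * v)⁻¹ + (1 - u * v⁻¹)⁻¹ - 1) := by
  rw [joukowski_sub_joukowski hu hv, inv_div]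
  have hvv : v * v⁻¹ = 1 := mul_inv_cancel₀ hv
  generalize v⁻¹ = y at *
  have h1 : 1 - u * v ≠ 0 := sub_ne_zero.mpr huv.symm
  have h2 : 1 - u * y ≠ 0 := sub_ne_zero.mpr huv'.symm
  have h3 : 1 - u ^ 2 ≠ 0 := sub_ne_zero.mpr hu2.symm
  field_simp
  linear_combination u ^ 2 * hvv

lemma norm_inv_joukowski_sub_joukowski_le {u v : ℂ} (hu : u ≠ 0) (hu1 : ‖u‖ < 1)
    (hv : ‖v‖ = 1) : ‖((u + u⁻¹) / 2 - (v + v⁻¹) / 2)⁻¹‖ ≤ 2 * ‖u‖ / (1 - ‖u‖) ^ 2 := by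
  have hv0 : v ≠ 0 := norm_ne_zero_iff.mp (by rw [hv]; exact one_ne_zero)
  have : 0 < 1 - ‖u‖ := sub_pos.mpr hu1
  have h1 : 1 - ‖u‖ ≤ ‖1 - u * v‖ := by
    simpa only [norm_one, norm_mul, hv, mul_one] using norm_sub_norm_le (1 : ℂ) (u * v)
  have h2 : 1 - ‖u‖ ≤ ‖1 - u * v⁻¹‖ := by
    simpa only [norm_one, norm_mul, norm_inv, hv, inv_one, mul_one] using
      norm_sub_norm_le (1 : ℂ) (u * v⁻¹)
  rw [joukowski_sub_joukowski hu hv0, inv_div, norm_div, norm_mul, norm_mul, Complex.norm_two, sq]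
  gcongr

namespace Polynomial

lemma Chebyshev.T_eval_joukowski {v : ℂ} (hv : v ≠ 0) (n : ℕ) :
    (T ℂ n).eval ((v + v⁻¹) / 2) = (v ^ n + v⁻¹ ^ n) / 2 := by
  rw [T_eq_half_mul_C_comp_two_mul_X, ← dickson_one_one_eq_chebyshev_C]
  simp only [eval_mul, eval_comp, eval_ofNat, eval_X]
  rw [mul_div_cancel₀ _ two_ne_zero, dickson_one_one_eval_add_inv _ _ (mul_inv_cancel₀ hv)]
  simp [div_eq_inv_mul]

lemma degree_comp_lt_of_natDegree_le_one {R : Type*} [CommSemiring R] {p q : R[X]} {m : ℕ}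
    (hp : p.degree < m) (hq : q.natDegree ≤ 1) : (p.comp q).degree < m := by
  rcases eq_or_ne p 0 with rfl | hp0
  · simp
  refine degree_le_natDegree.trans_lt (WithBot.coe_lt_coe.mpr ?_)
  calc (p.comp q).natDegree ≤ p.natDegree * q.natDegree := natDegree_comp_le
    _ ≤ p.natDegree := mul_le_of_le_one_right' hq
    _ < m := (natDegree_lt_iff_degree_lt hp0).mpr hp

end Polynomial

open Chebyshev

/-- The truncation after `m` terms of the Chebyshev expansion of `x ↦ ((u + u⁻¹)/2 - x)⁻¹`. -/
noncomputable def chebyshevResolventApprox (u : ℂ) (m : ℕ) : ℂ[X] :=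
  C (2 * u / (1 - u ^ 2)) * (∑ k ∈ Finset.range m, C (2 * u ^ k) * T ℂ k - 1)

lemma natDegree_chebyshevResolventApprox_le (u : ℂ) (m : ℕ) :
    (chebyshevResolventApprox u (m + 1)).natDegree ≤ m := by
  refine (natDegree_C_mul_le _ _).trans <| (natDegree_sub_le _ _).trans <| max_le ?_ (by simp)
  refine natDegree_sum_le_of_forall_le _ _ fun k hk => (natDegree_C_mul_le _ _).trans ?_
  rw [natDegree_T, Int.natAbs_natCast]
  exact Nat.lt_succ_iff.mp (Finset.mem_range.mp hk)

lemma chebyshevResolventApprox_eval_joukowski (u : ℂ) {v : ℂ} (hv : v ≠ 0) (m : ℕ) :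
    (chebyshevResolventApprox u m).eval ((v + v⁻¹) / 2) = 2 * u / (1 - u ^ 2) *
      (∑ k ∈ Finset.range m, (u * v) ^ k + ∑ k ∈ Finset.range m, (u * v⁻¹) ^ k - 1) := by
  simp only [chebyshevResolventApprox, eval_mul, eval_C, eval_sub, eval_one, eval_finsetSum,
    T_eval_joukowski hv, ← Finset.sum_add_distrib, mul_pow]
  congr 2
  exact Finset.sum_congr rfl fun k _ => by ring

lemma inv_joukowski_sub_sub_chebyshevResolventApprox_eval {u v : ℂ} (hu : u ≠ 0) (hv : v ≠ 0)
    (huv : u * v ≠ 1) (huv' : u * v⁻¹ ≠ 1) (hu2 : u ^ 2 ≠ 1) (m : ℕ) :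
    ((u + u⁻¹) / 2 - (v + v⁻¹) / 2)⁻¹ - (chebyshevResolventApprox u m).eval ((v + v⁻¹) / 2) =
      2 * u / (1 - u ^ 2) * ((u * v) ^ m / (1 - u * v) + (u * v⁻¹) ^ m / (1 - u * v⁻¹)) := by
  rw [inv_joukowski_sub_joukowski hu hv huv huv' hu2,
    chebyshevResolventApprox_eval_joukowski u hv, ← inv_one_sub_sub_geom_sum huv,
    ← inv_one_sub_sub_geom_sum huv']
  ring

lemma norm_inv_joukowski_sub_sub_chebyshevResolventApprox_eval_le {u v : ℂ} (hu : u ≠ 0)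
    (hu1 : ‖u‖ < 1) (hv : ‖v‖ = 1) (m : ℕ) :
    ‖((u + u⁻¹) / 2 - (v + v⁻¹) / 2)⁻¹ - (chebyshevResolventApprox u m).eval ((v + v⁻¹) / 2)‖ ≤
      4 * ‖u‖ / (1 - ‖u‖) ^ 2 * ‖u‖ ^ m := by
  have hv0 : v ≠ 0 := norm_ne_zero_iff.mp (by rw [hv]; exact one_ne_zero)
  have h1u : 0 < 1 - ‖u‖ := sub_pos.mpr hu1
  have huv : ‖u * v‖ = ‖u‖ := by rw [norm_mul, hv, mul_one]
  have huv' : ‖u * v⁻¹‖ = ‖u‖ := by rw [norm_mul, norm_inv, hv, inv_one, mul_one]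
  have hne : ∀ t : ℂ, ‖t‖ < 1 → t ≠ 1 := fun t ht h => by simp [h] at ht
  have hu2 : ‖u ^ 2‖ < 1 := by rw [norm_pow]; exact pow_lt_one₀ (norm_nonneg u) hu1 two_ne_zero
  rw [inv_joukowski_sub_sub_chebyshevResolventApprox_eval hu hv0 (hne _ (huv ▸ hu1))
    (hne _ (huv' ▸ hu1)) (hne _ hu2)]
  have hfactor : ‖2 * u / (1 - u ^ 2)‖ ≤ 2 * ‖u‖ / (1 - ‖u‖) := by
    rw [norm_div, norm_mul, Complex.norm_two]
    gcongr
    calc 1 - ‖u‖ ≤ 1 - ‖u ^ 2‖ := by rw [norm_pow]; nlinarith [norm_nonneg u]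
      _ ≤ ‖1 - u ^ 2‖ := by simpa only [norm_one] using norm_sub_norm_le (1 : ℂ) (u ^ 2)
  have hsum := norm_add_le_of_le (norm_pow_div_one_sub_le (huv ▸ hu1) m)
    (norm_pow_div_one_sub_le (huv' ▸ hu1) m)
  rw [huv, huv'] at hsum
  calc _ ≤ 2 * ‖u‖ / (1 - ‖u‖) * (‖u‖ ^ m / (1 - ‖u‖) + ‖u‖ ^ m / (1 - ‖u‖)) := by
        rw [norm_mul]; gcongr
    _ = 4 * ‖u‖ / (1 - ‖u‖) ^ 2 * ‖u‖ ^ m := by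
        field_simp
        ring

lemma exists_degree_lt_norm_inv_joukowski_sub_eval_le {u : ℂ} (hu : u ≠ 0) (hu1 : ‖u‖ < 1)
    (m : ℕ) : ∃ p : ℂ[X], p.degree < m ∧ ∀ x ∈ Icc (-1 : ℝ) 1,
      ‖((u + u⁻¹) / 2 - x)⁻¹ - p.eval (x : ℂ)‖ ≤ 4 * ‖u‖ / (1 - ‖u‖) ^ 2 * ‖u‖ ^ m := by
  cases m with
  | zero =>
    refine ⟨0, by simp, fun x hx => ?_⟩
    obtain ⟨v, hv, hvx⟩ := Complex.exists_norm_eq_one_joukowski_eq hx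
    rw [eval_zero, sub_zero, pow_zero, mul_one, ← hvx]
    refine (norm_inv_joukowski_sub_joukowski_le hu hu1 hv).trans ?_
    gcongr
    norm_num
  | succ m =>
    refine ⟨chebyshevResolventApprox u (m + 1), degree_le_natDegree.trans_lt
      (WithBot.coe_lt_coe.mpr (Nat.lt_succ_of_le (natDegree_chebyshevResolventApprox_le u m))),
      fun x hx => ?_⟩
    obtain ⟨v, hv, hvx⟩ := Complex.exists_norm_eq_one_joukowski_eq hx
    rw [← hvx]
    exact norm_inv_joukowski_sub_sub_chebyshevResolventApprox_eval_le hu hu1 hv _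

lemma exists_degree_lt_norm_inv_sub_eval_le {a b : ℝ} (hab : a < b) {z u : ℂ} (hu : u ≠ 0)
    (hu1 : ‖u‖ < 1) (hzu : (u + u⁻¹) / 2 = (2 * z - (b + a)) / (b - a)) (m : ℕ) :
    ∃ q : ℂ[X], q.degree < m ∧ ∀ t ∈ Icc a b,
      ‖((t : ℂ) - z)⁻¹ - q.eval (t : ℂ)‖ ≤ 2 / (b - a) * (4 * ‖u‖ / (1 - ‖u‖) ^ 2) * ‖u‖ ^ m := by
  obtain ⟨p, hp, hpx⟩ := exists_degree_lt_norm_inv_joukowski_sub_eval_le hu hu1 m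
  have hba : 0 < b - a := sub_pos.mpr hab
  have hbaC : (b : ℂ) - a ≠ 0 := by exact_mod_cast hba.ne'
  set c : ℂ := 2 / (b - a)
  set d : ℂ := (b + a) / (b - a)
  have hc0 : c ≠ 0 := div_ne_zero two_ne_zero hbaC
  refine ⟨C (-c) * p.comp (C c * X - C d), ?_, fun t ht => ?_⟩
  · rw [degree_C_mul (neg_ne_zero.mpr hc0)]
    exact degree_comp_lt_of_natDegree_le_one hp (by compute_degree)
  set x : ℝ := (2 * t - (b + a)) / (b - a)
  have hx : x ∈ Icc (-1 : ℝ) 1 := by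
    constructor
    · rw [le_div_iff₀ hba]; linarith [ht.1]
    · rw [div_le_iff₀ hba]; linarith [ht.2]
  have hwx : (u + u⁻¹) / 2 - x = c * (z - t) := by
    rw [hzu]
    push_cast [x, c]
    field_simp
    ring
  have htz : ((t : ℂ) - z)⁻¹ = -c * ((u + u⁻¹) / 2 - x)⁻¹ := by
    rw [hwx, mul_inv, ← mul_assoc, neg_mul, mul_inv_cancel₀ hc0, neg_one_mul, ← inv_neg, neg_sub]
  have hqt : (C (-c) * p.comp (C c * X - C d)).eval (t : ℂ) = -c * p.eval (x : ℂ) := by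
    simp only [eval_mul, eval_C, eval_comp, eval_sub, eval_X]
    congr 2
    push_cast [x, c, d]
    ring
  have hc : ‖-c‖ = 2 / (b - a) := by
    rw [norm_neg, norm_div, Complex.norm_two, ← Complex.ofReal_sub, Complex.norm_real,
      Real.norm_eq_abs, abs_of_pos hba]
  rw [htz, hqt, ← mul_sub, norm_mul, hc, mul_assoc]
  exact mul_le_mul_of_nonneg_left (hpx x hx) (by positivity)

namespace Matrix

section Locality

variable {ι R : Type*} [Fintype ι] [DecidableEq ι] (G : SimpleGraph ι) {A : Matrix ι ι R}

lemma pow_apply_eq_zero_of_lt_length [Semiring R]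
    (hA : ∀ u v, u ≠ v → A u v ≠ 0 → G.Adj u v) {i : ι} (k : ℕ) {j : ι}
    (hij : ∀ w : G.Walk i j, k < w.length) : (A ^ k) i j = 0 := by
  induction k generalizing j with
  | zero =>
    rw [pow_zero]
    exact one_apply_ne fun h => by subst h; exact (hij .nil).false
  | succ k ih =>
    rw [pow_succ, mul_apply]
    refine Finset.sum_eq_zero fun l _ => ?_
    by_cases hlj : l = j
    · rw [hlj, ih fun w => (Nat.lt_succ_self k).trans (hij w), zero_mul]
    by_cases hAlj : A l j = 0
    · rw [hAlj, mul_zero]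
    have hadj := hA l j hlj hAlj
    rw [ih fun w => by simpa using hij (w.concat hadj), zero_mul]

lemma aeval_apply_eq_zero_of_degree_lt [CommSemiring R]
    (hA : ∀ u v, u ≠ v → A u v ≠ 0 → G.Adj u v) {p : R[X]} {m : ℕ} (hp : p.degree < m)
    {i j : ι} (hij : ∀ w : G.Walk i j, m ≤ w.length) : aeval A p i j = 0 := by
  rw [aeval_eq_sum_range, sum_apply]
  refine Finset.sum_eq_zero fun k _ => ?_
  by_cases hk : p.coeff k = 0
  · rw [hk, zero_smul, zero_apply]
  have hkm : k < m := by exact_mod_cast (le_degree_of_ne_zero hk).trans_lt hp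
  rw [smul_apply, pow_apply_eq_zero_of_lt_length G hA k fun w => hkm.trans_le (hij w), smul_zero]

end Locality

variable {𝕜 m n : Type*} [RCLike 𝕜] [Fintype m] [Fintype n] [DecidableEq n]

open scoped Matrix.Norms.L2Operator in
lemma norm_apply_le_l2_opNorm (A : Matrix m n 𝕜) (i : m) (j : n) : ‖A i j‖ ≤ ‖A‖ :=
  calc ‖A i j‖ ≤ ‖WithLp.toLp 2 (A.col j)‖ := PiLp.norm_apply_le (WithLp.toLp 2 (A.col j)) i
    _ ≤ ‖A‖ := by simpa using A.l2_opNorm_mulVec (EuclideanSpace.single j 1)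

open scoped Matrix.Norms.L2Operator in
lemma norm_conjStarAlgAut_diagonal_apply_le (U : unitary (Matrix n n 𝕜)) {d : n → 𝕜} {B : ℝ}
    (hd : ∀ k, ‖d k‖ ≤ B) (i j : n) : ‖conjStarAlgAut 𝕜 _ U (diagonal d) i j‖ ≤ B := by
  refine (norm_apply_le_l2_opNorm _ i j).trans ?_
  rw [conjStarAlgAut_apply, ← Unitary.coe_star, CStarRing.norm_mul_coe_unitary,
    CStarRing.norm_coe_unitary_mul, l2_opNorm_diagonal]
  exact (pi_norm_le_iff_of_nonneg ((norm_nonneg _).trans (hd i))).mpr hd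

lemma aeval_diagonal {R : Type*} [CommSemiring R] (d : n → R) (p : R[X]) :
    aeval (diagonal d) p = diagonal fun k => p.eval (d k) := by
  rw [← diagonalAlgHom_apply R, aeval_algHom_apply, aeval_pi_apply]
  simp

namespace IsHermitian

variable {A : Matrix n n 𝕜} (hA : A.IsHermitian)

lemma aeval_eq (p : 𝕜[X]) :
    aeval A p = conjStarAlgAut 𝕜 _ hA.eigenvectorUnitary
      (diagonal fun k => p.eval (hA.eigenvalues k : 𝕜)) := by
  conv_lhs => rw [hA.spectral_theorem]
  rw [aeval_algHom_apply, aeval_diagonal]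
  rfl

lemma inv_sub_smul_one_eq {z : 𝕜} (hz : ∀ k, (hA.eigenvalues k : 𝕜) ≠ z) :
    (A - z • 1)⁻¹ = conjStarAlgAut 𝕜 _ hA.eigenvectorUnitary
      (diagonal fun k => ((hA.eigenvalues k : 𝕜) - z)⁻¹) := by
  refine inv_eq_left_inv ?_
  have hspec : A = conjStarAlgAut 𝕜 _ hA.eigenvectorUnitary
      (diagonal fun k => (hA.eigenvalues k : 𝕜)) := hA.spectral_theorem
  have hsub : A - z • 1 = conjStarAlgAut 𝕜 _ hA.eigenvectorUnitary
      (diagonal fun k => (hA.eigenvalues k : 𝕜) - z) := by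
    rw [← diagonal_sub, map_sub, ← smul_one_eq_diagonal, map_smul, map_one, ← hspec]
  rw [hsub, ← map_mul, diagonal_mul_diagonal]
  simp [inv_mul_cancel₀ (sub_ne_zero.mpr (hz _))]

end IsHermitian

end Matrix

lemma norm_inv_sub_smul_one_apply_le {n : ℕ} {H : Matrix (Fin n) (Fin n) ℂ}
    (hH : H.IsHermitian) {S : Set ℝ} (hS : ∀ k, hH.eigenvalues k ∈ S) {z : ℂ}
    (hz : z ∉ Complex.ofReal '' S) {p : ℂ[X]} {m : ℕ} (hp : p.degree < m) {ε : ℝ}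
    (hε : ∀ t ∈ S, ‖((t : ℂ) - z)⁻¹ - p.eval (t : ℂ)‖ ≤ ε) {i j : Fin n}
    (hij : ∀ w : (matGraph H).Walk i j, m ≤ w.length) : ‖(H - z • 1)⁻¹ i j‖ ≤ ε := by
  have hloc : aeval H p i j = 0 :=
    aeval_apply_eq_zero_of_degree_lt (matGraph H) (fun _ _ huv h => ⟨huv, Or.inl h⟩) hp hij
  have hrep : (H - z • 1)⁻¹ - aeval H p = conjStarAlgAut ℂ _ hH.eigenvectorUnitary
      (diagonal fun k => ((hH.eigenvalues k : ℂ) - z)⁻¹ - p.eval (hH.eigenvalues k : ℂ)) := by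
    rw [hH.inv_sub_smul_one_eq fun k h => hz ⟨_, hS k, h⟩, hH.aeval_eq, ← map_sub, diagonal_sub]
    rfl
  calc ‖(H - z • 1)⁻¹ i j‖ = ‖((H - z • 1)⁻¹ - aeval H p) i j‖ := by
        rw [Matrix.sub_apply, hloc, sub_zero]
    _ ≤ ε := by
        rw [hrep]
        exact norm_conjStarAlgAut_diagonal_apply_le _ (fun k => hε _ (hS k)) i j

/-- Exponential localization of the resolvent: for `z` off the
interval `[a,b]`, there are constants `C > 0` and `ρ > 1`, depending only on
`z, a, b` — explicitly `ρ = |w + √(w²−1)|` with `w = (2z−(b+a))/(b−a)` and the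
branch of the square root chosen so that `ρ ≥ 1` — such that for every Hermitian
matrix `H` with spectrum in `[a,b]` and indices `i,j` at graph distance at least
`m`, `|(H − zI)⁻¹(i,j)| ≤ C·ρ^{−m}`. -/
theorem resolvent_entry_exponential_decay (a b : ℝ) (hab : a < b)
    (z : ℂ) (hz : z ∉ Complex.ofReal '' Set.Icc a b) :
    ∃ C : ℝ, 0 < C ∧ ∃ ρ : ℝ, 1 < ρ ∧
      ρ = max
        (‖(2 * z - (b + a)) / (b - a) +
          (((2 * z - (b + a)) / (b - a)) ^ 2 - 1) ^ ((1 : ℂ) / 2)‖)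
        (‖(2 * z - (b + a)) / (b - a) -
          (((2 * z - (b + a)) / (b - a)) ^ 2 - 1) ^ ((1 : ℂ) / 2)‖) ∧
      ∀ (n : ℕ) (H : Matrix (Fin n) (Fin n) ℂ) (hH : H.IsHermitian),
        (∀ k : Fin n, hH.eigenvalues k ∈ Set.Icc a b) →
        ∀ (i j : Fin n) (m : ℕ),
          (∀ w : (matGraph H).Walk i j, m ≤ w.length) →
          ‖(H - z • 1)⁻¹ i j‖ ≤ C / ρ ^ m := by
  have hba : 0 < b - a := sub_pos.mpr hab
  set w := (2 * z - (b + a)) / (b - a) with hw_def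
  have hw : w ∉ Complex.ofReal '' Icc (-1) 1 := by
    rintro ⟨x, hx, hxw⟩
    refine hz ⟨((b - a) * x + (b + a)) / 2, ⟨by nlinarith [hx.1], by nlinarith [hx.2]⟩, ?_⟩
    rw [hw_def, eq_div_iff (by exact_mod_cast hba.ne')] at hxw
    push_cast
    linear_combination hxw / 2
  have hs : ((w ^ 2 - 1) ^ ((1 : ℂ) / 2)) ^ 2 = w ^ 2 - 1 := by
    rw [one_div, Complex.cpow_ofNat_inv_pow]
  obtain ⟨u, hu0, huw, hu1, hρ⟩ := Complex.exists_joukowski_eq_norm_lt_one hw hs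
  have hu_pos : 0 < ‖u‖ := norm_pos_iff.mpr hu0
  have hu_lt : 0 < 1 - ‖u‖ := sub_pos.mpr hu1
  refine ⟨2 / (b - a) * (4 * ‖u‖ / (1 - ‖u‖) ^ 2), by positivity, ‖u‖⁻¹,
    (one_lt_inv₀ hu_pos).mpr hu1, hρ, fun n H hH hspec i j m hij => ?_⟩
  obtain ⟨q, hq, hqε⟩ := exists_degree_lt_norm_inv_sub_eval_le hab hu0 hu1 huw m
  rw [inv_pow, div_inv_eq_mul]
  exact norm_inv_sub_smul_one_apply_le hH hspec hz hq hqε hij
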